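/- Given κ₁ = σ₁, the equivalence π₁₂₁ ≃ π₂₁₂ forces the parameter conditions (par2): if there exists a bijective ℚ(q)-linear map Φ : F⊗F⊗F → F⊗F⊗F such that for all 1 ≤ I,J ≤ 7, (Σ_{K,L=1}^{7} π₂(t_{IK})⊗π₁(t_{KL})⊗π₂(t_{LJ})) ∘ Φ = Φ ∘ (Σ_{K,L=1}^{7} π₁(t_{IK})⊗π₂(t_{KL})⊗π₁(t_{LJ})), then κ₁ = κ₂ = σ₂ and α₁β₁ = α₂β₂. -/
import Mathlib


open TensorProduct

noncomputable section

abbrev Fq : Type := RatFunc ℚ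

def q : Fq := RatFunc.X

abbrev F : Type := ℕ →₀ Fq

def ket (m : ℕ) : F := Finsupp.single m 1

/-- Linear operator on the Fock space from its action on the basis. -/
def opOf (v : ℕ → F) : F →ₗ[Fq] F := Finsupp.lift F Fq ℕ v

/-- q²-oscillator K -/
def K2 : F →ₗ[Fq] F := opOf fun m => q ^ (2 * m) • ket m
/-- q²-oscillator A⁺ -/
def Ap : F →ₗ[Fq] F := opOf fun m => ket (m + 1)
/-- q²-oscillator A⁻ -/
def Am : F →ₗ[Fq] F := opOf fun m => (1 - q ^ (4 * m)) • ket (m - 1)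
/-- q-oscillator k -/
def kk : F →ₗ[Fq] F := opOf fun m => q ^ m • ket m
/-- q-oscillator a⁺ -/
def ap : F →ₗ[Fq] F := opOf fun m => ket (m + 1)
/-- q-oscillator a⁻ -/
def am : F →ₗ[Fq] F := opOf fun m => (1 - q ^ (2 * m)) • ket (m - 1)

def pi1 (α β μ ν κ σ : Fq) : Matrix (Fin 7) (Fin 7) (F →ₗ[Fq] F) :=
  !![μ • Am, α • K2, 0, 0, 0, 0, 0;
     β • K2, ν • Ap, 0, 0, 0, 0, 0;
     0, 0, κ • LinearMap.id, 0, 0, 0, 0;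
     0, 0, 0, σ • LinearMap.id, 0, 0, 0;
     0, 0, 0, 0, κ⁻¹ • LinearMap.id, 0, 0;
     0, 0, 0, 0, 0, ν⁻¹ • Am, (q ^ 2 * β⁻¹) • K2;
     0, 0, 0, 0, 0, (q ^ 2 * α⁻¹) • K2, μ⁻¹ • Ap]

def pi2 (α β μ ν κ σ : Fq) : Matrix (Fin 7) (Fin 7) (F →ₗ[Fq] F) :=
  !![κ • LinearMap.id, 0, 0, 0, 0, 0, 0;
     0, μ • Am, α • K2, 0, 0, 0, 0;
     0, β • K2, ν • Ap, 0, 0, 0, 0;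
     0, 0, 0, σ • LinearMap.id, 0, 0, 0;
     0, 0, 0, 0, ν⁻¹ • Am, (q ^ 2 * β⁻¹) • K2, 0;
     0, 0, 0, 0, (q ^ 2 * α⁻¹) • K2, μ⁻¹ • Ap, 0;
     0, 0, 0, 0, 0, 0, κ⁻¹ • LinearMap.id]

def pi3 (α μ κa κb : Fq) : Matrix (Fin 7) (Fin 7) (F →ₗ[Fq] F) :=
  !![κa • LinearMap.id, 0, 0, 0, 0, 0, 0;
     0, κb • LinearMap.id, 0, 0, 0, 0, 0;
     0, 0, μ • (am ∘ₗ am), α • (kk ∘ₗ am), (-((1 + q ^ 2) * μ)⁻¹ * α ^ 2) • (kk ∘ₗ kk), 0, 0;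
     0, 0, (-(1 + q ^ 2) * α⁻¹ * μ) • (am ∘ₗ kk), am ∘ₗ ap - kk ∘ₗ kk, (-(q * μ)⁻¹ * α) • (kk ∘ₗ ap), 0, 0;
     0, 0, (-(1 + q ^ 2) * q ^ 2 * α⁻¹ ^ 2 * μ) • (kk ∘ₗ kk), ((1 + q ^ 2) * α⁻¹) • (kk ∘ₗ ap), μ⁻¹ • (ap ∘ₗ ap), 0, 0;
     0, 0, 0, 0, 0, κb⁻¹ • LinearMap.id, 0;
     0, 0, 0, 0, 0, 0, κa⁻¹ • LinearMap.id]

def rhoB : Fin 7 → ℤ := ![5, 3, 1, 0, -1, -3, -5]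

def CB : Matrix (Fin 7) (Fin 7) Fq := fun i j => if (i : ℕ) + (j : ℕ) = 6 then q ^ rhoB j else 0

set_option synthInstance.maxHeartbeats 1000000
set_option maxHeartbeats 2000000

lemma opOf_ket (v : ℕ → F) (m : ℕ) : opOf v (ket m) = v m := by
  simp [opOf, ket]

lemma K2_ket (m : ℕ) : K2 (ket m) = q^(2*m) • ket m := opOf_ket _ m
lemma Ap_ket (m : ℕ) : Ap (ket m) = ket (m+1) := opOf_ket _ m
lemma Am_ket (m : ℕ) : Am (ket m) = (1 - q^(4*m)) • ket (m-1) := opOf_ket _ m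

def e : F ⊗[Fq] (F ⊗[Fq] F) ≃ₗ[Fq] ((ℕ × ℕ × ℕ) →₀ Fq) :=
  (TensorProduct.congr (LinearEquiv.refl Fq F) (finsuppTensorFinsupp' Fq ℕ ℕ)).trans
    (finsuppTensorFinsupp' Fq ℕ (ℕ × ℕ))

lemma e_ket (a b c : ℕ) : e (ket a ⊗ₜ (ket b ⊗ₜ ket c)) = Finsupp.single (a,b,c) 1 := by
  simp [e, ket, finsuppTensorFinsupp'_single_tmul_single]

def φ (p : ℕ × ℕ × ℕ) : (F ⊗[Fq] (F ⊗[Fq] F)) →ₗ[Fq] Fq :=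
  (Finsupp.lapply p) ∘ₗ e.toLinearMap

lemma φ_ket (p : ℕ × ℕ × ℕ) (a b c : ℕ) :
    φ p (ket a ⊗ₜ (ket b ⊗ₜ ket c)) = if (a,b,c) = p then 1 else 0 := by
  simp [φ, e_ket, Finsupp.single_apply]

lemma ext3 {M : Type*} [AddCommMonoid M] [Module Fq M]
    (f g : F ⊗[Fq] (F ⊗[Fq] F) →ₗ[Fq] M)
    (h : ∀ a b c : ℕ, f (ket a ⊗ₜ (ket b ⊗ₜ ket c)) = g (ket a ⊗ₜ (ket b ⊗ₜ ket c))) : f = g := by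
  ext a b c
  simpa [ket] using h a b c

set_option synthInstance.maxHeartbeats 1000000 in
lemma tmul3_smul (x y z : Fq) (u v w : F) :
    (x • u) ⊗ₜ[Fq] ((y • v) ⊗ₜ[Fq] (z • w)) = (x*(y*z)) • (u ⊗ₜ[Fq] (v ⊗ₜ[Fq] w)) := by
  rw [TensorProduct.smul_tmul_smul, TensorProduct.smul_tmul_smul]

set_option synthInstance.maxHeartbeats 1000000 in
lemma coordC (s1 s2 s3 : Fq) (a b c : ℕ) :
    (φ (a,b,c)) ∘ₗ (TensorProduct.map (s1 • LinearMap.id) (TensorProduct.map (s2 • K2) (s3 • Am)))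
      = (s1*s2*s3*q^(2*b)*(1-q^(4*(c+1)))) • φ (a,b,c+1) := by
  apply ext3
  intro i j k
  simp only [LinearMap.comp_apply, TensorProduct.map_tmul, LinearMap.smul_apply,
    LinearMap.id_apply, K2_ket, Am_ket, smul_smul]
  rw [tmul3_smul, map_smul, φ_ket, φ_ket]
  simp only [smul_eq_mul, Prod.mk.injEq]
  rcases eq_or_ne k (c+1) with hk | hk
  · subst hk
    simp only [Nat.add_sub_cancel]
    split_ifs with h
    · obtain ⟨rfl, rfl, -⟩ := h; ring
    · ring
  · have h2 : ¬ (i = a ∧ j = b ∧ k = c + 1) := fun h => hk h.2.2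
    rcases k with _ | k'
    · rw [if_neg h2]
      split_ifs with h <;> ring
    · have hkc : k' ≠ c := fun h => hk (by omega)
      have hA : ¬ (i = a ∧ j = b ∧ k' + 1 - 1 = c) := by
        rintro ⟨-, -, h⟩; exact hkc (by omega)
      rw [if_neg hA, if_neg h2]; ring

set_option synthInstance.maxHeartbeats 1000000 in
lemma coordB (s1 s2 s3 : Fq) (a b c : ℕ) :
    (φ (a,b,c)) ∘ₗ (TensorProduct.map (s1 • LinearMap.id) (TensorProduct.map (s2 • Am) (s3 • LinearMap.id)))
      = (s1*s2*s3*(1-q^(4*(b+1)))) • φ (a,b+1,c) := by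
  apply ext3
  intro i j k
  simp only [LinearMap.comp_apply, TensorProduct.map_tmul, LinearMap.smul_apply,
    LinearMap.id_apply, Am_ket, smul_smul]
  rw [tmul3_smul, map_smul, φ_ket, φ_ket]
  simp only [smul_eq_mul, Prod.mk.injEq]
  rcases eq_or_ne j (b+1) with hj | hj
  · subst hj
    simp only [Nat.add_sub_cancel]
    split_ifs with h
    · ring
    · ring
  · have h2 : ¬ (i = a ∧ j = b + 1 ∧ k = c) := fun h => hj h.2.1
    rcases j with _ | j'
    · rw [if_neg h2]
      split_ifs with h <;> ring
    · have hjb : j' ≠ b := fun h => hj (by omega)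
      have hA : ¬ (i = a ∧ j' + 1 - 1 = b ∧ k = c) := by
        rintro ⟨-, h, -⟩; exact hjb (by omega)
      rw [if_neg hA, if_neg h2]; ring

set_option synthInstance.maxHeartbeats 1000000 in
lemma coordA (s1 s2 s3 : Fq) (a b c : ℕ) :
    (φ (a,b,c)) ∘ₗ (TensorProduct.map (s1 • Am) (TensorProduct.map (s2 • K2) (s3 • LinearMap.id)))
      = (s1*s2*s3*(1-q^(4*(a+1)))*q^(2*b)) • φ (a+1,b,c) := by
  apply ext3
  intro i j k
  simp only [LinearMap.comp_apply, TensorProduct.map_tmul, LinearMap.smul_apply,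
    LinearMap.id_apply, K2_ket, Am_ket, smul_smul]
  rw [tmul3_smul, map_smul, φ_ket, φ_ket]
  simp only [smul_eq_mul, Prod.mk.injEq]
  rcases eq_or_ne i (a+1) with hi | hi
  · subst hi
    simp only [Nat.add_sub_cancel]
    split_ifs with h
    · obtain ⟨-, rfl, -⟩ := h; ring
    · ring
  · have h2 : ¬ (i = a + 1 ∧ j = b ∧ k = c) := fun h => hi h.1
    rcases i with _ | i'
    · rw [if_neg h2]
      split_ifs with h <;> ring
    · have hia : i' ≠ a := fun h => hi (by omega)
      have hA : ¬ (i' + 1 - 1 = a ∧ j = b ∧ k = c) := by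
        rintro ⟨h, -, -⟩; exact hia (by omega)
      rw [if_neg hA, if_neg h2]; ring
lemma q_ne_zero : q ≠ 0 := RatFunc.X_ne_zero

lemma one_sub_q_pow_ne_zero {k : ℕ} (hk : k ≠ 0) : (1:Fq) - q^k ≠ 0 := by
  intro h
  have h1 : q ^ k = 1 := (sub_eq_zero.mp h).symm
  have h2 : (Polynomial.X : Polynomial ℚ) ^ k = 1 := by
    apply RatFunc.algebraMap_injective
    rw [map_pow, map_one]
    simpa [q, RatFunc.algebraMap_X] using h1
  have := congrArg Polynomial.natDegree h2
  simp [Polynomial.natDegree_X_pow] at this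
  exact hk this
@[simp] lemma pi1_e_0_0 (α β μ ν κ σ : Fq) : pi1 α β μ ν κ σ 0 0 = μ • Am := rfl
@[simp] lemma pi1_e_0_1 (α β μ ν κ σ : Fq) : pi1 α β μ ν κ σ 0 1 = α • K2 := rfl
@[simp] lemma pi1_e_0_2 (α β μ ν κ σ : Fq) : pi1 α β μ ν κ σ 0 2 = 0 := rfl
@[simp] lemma pi1_e_0_3 (α β μ ν κ σ : Fq) : pi1 α β μ ν κ σ 0 3 = 0 := rfl
@[simp] lemma pi1_e_0_4 (α β μ ν κ σ : Fq) : pi1 α β μ ν κ σ 0 4 = 0 := rfl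
@[simp] lemma pi1_e_0_5 (α β μ ν κ σ : Fq) : pi1 α β μ ν κ σ 0 5 = 0 := rfl
@[simp] lemma pi1_e_0_6 (α β μ ν κ σ : Fq) : pi1 α β μ ν κ σ 0 6 = 0 := rfl
@[simp] lemma pi1_e_1_0 (α β μ ν κ σ : Fq) : pi1 α β μ ν κ σ 1 0 = β • K2 := rfl
@[simp] lemma pi1_e_1_1 (α β μ ν κ σ : Fq) : pi1 α β μ ν κ σ 1 1 = ν • Ap := rfl
@[simp] lemma pi1_e_1_2 (α β μ ν κ σ : Fq) : pi1 α β μ ν κ σ 1 2 = 0 := rfl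
@[simp] lemma pi1_e_1_3 (α β μ ν κ σ : Fq) : pi1 α β μ ν κ σ 1 3 = 0 := rfl
@[simp] lemma pi1_e_1_4 (α β μ ν κ σ : Fq) : pi1 α β μ ν κ σ 1 4 = 0 := rfl
@[simp] lemma pi1_e_1_5 (α β μ ν κ σ : Fq) : pi1 α β μ ν κ σ 1 5 = 0 := rfl
@[simp] lemma pi1_e_1_6 (α β μ ν κ σ : Fq) : pi1 α β μ ν κ σ 1 6 = 0 := rfl
@[simp] lemma pi1_e_2_0 (α β μ ν κ σ : Fq) : pi1 α β μ ν κ σ 2 0 = 0 := rfl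
@[simp] lemma pi1_e_2_1 (α β μ ν κ σ : Fq) : pi1 α β μ ν κ σ 2 1 = 0 := rfl
@[simp] lemma pi1_e_2_2 (α β μ ν κ σ : Fq) : pi1 α β μ ν κ σ 2 2 = κ • LinearMap.id := rfl
@[simp] lemma pi1_e_2_3 (α β μ ν κ σ : Fq) : pi1 α β μ ν κ σ 2 3 = 0 := rfl
@[simp] lemma pi1_e_2_4 (α β μ ν κ σ : Fq) : pi1 α β μ ν κ σ 2 4 = 0 := rfl
@[simp] lemma pi1_e_2_5 (α β μ ν κ σ : Fq) : pi1 α β μ ν κ σ 2 5 = 0 := rfl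
@[simp] lemma pi1_e_2_6 (α β μ ν κ σ : Fq) : pi1 α β μ ν κ σ 2 6 = 0 := rfl
@[simp] lemma pi1_e_3_0 (α β μ ν κ σ : Fq) : pi1 α β μ ν κ σ 3 0 = 0 := rfl
@[simp] lemma pi1_e_3_1 (α β μ ν κ σ : Fq) : pi1 α β μ ν κ σ 3 1 = 0 := rfl
@[simp] lemma pi1_e_3_2 (α β μ ν κ σ : Fq) : pi1 α β μ ν κ σ 3 2 = 0 := rfl
@[simp] lemma pi1_e_3_3 (α β μ ν κ σ : Fq) : pi1 α β μ ν κ σ 3 3 = σ • LinearMap.id := rfl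
@[simp] lemma pi1_e_3_4 (α β μ ν κ σ : Fq) : pi1 α β μ ν κ σ 3 4 = 0 := rfl
@[simp] lemma pi1_e_3_5 (α β μ ν κ σ : Fq) : pi1 α β μ ν κ σ 3 5 = 0 := rfl
@[simp] lemma pi1_e_3_6 (α β μ ν κ σ : Fq) : pi1 α β μ ν κ σ 3 6 = 0 := rfl
@[simp] lemma pi1_e_4_0 (α β μ ν κ σ : Fq) : pi1 α β μ ν κ σ 4 0 = 0 := rfl
@[simp] lemma pi1_e_4_1 (α β μ ν κ σ : Fq) : pi1 α β μ ν κ σ 4 1 = 0 := rfl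
@[simp] lemma pi1_e_4_2 (α β μ ν κ σ : Fq) : pi1 α β μ ν κ σ 4 2 = 0 := rfl
@[simp] lemma pi1_e_4_3 (α β μ ν κ σ : Fq) : pi1 α β μ ν κ σ 4 3 = 0 := rfl
@[simp] lemma pi1_e_4_4 (α β μ ν κ σ : Fq) : pi1 α β μ ν κ σ 4 4 = κ⁻¹ • LinearMap.id := rfl
@[simp] lemma pi1_e_4_5 (α β μ ν κ σ : Fq) : pi1 α β μ ν κ σ 4 5 = 0 := rfl
@[simp] lemma pi1_e_4_6 (α β μ ν κ σ : Fq) : pi1 α β μ ν κ σ 4 6 = 0 := rfl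
@[simp] lemma pi1_e_5_0 (α β μ ν κ σ : Fq) : pi1 α β μ ν κ σ 5 0 = 0 := rfl
@[simp] lemma pi1_e_5_1 (α β μ ν κ σ : Fq) : pi1 α β μ ν κ σ 5 1 = 0 := rfl
@[simp] lemma pi1_e_5_2 (α β μ ν κ σ : Fq) : pi1 α β μ ν κ σ 5 2 = 0 := rfl
@[simp] lemma pi1_e_5_3 (α β μ ν κ σ : Fq) : pi1 α β μ ν κ σ 5 3 = 0 := rfl
@[simp] lemma pi1_e_5_4 (α β μ ν κ σ : Fq) : pi1 α β μ ν κ σ 5 4 = 0 := rfl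
@[simp] lemma pi1_e_5_5 (α β μ ν κ σ : Fq) : pi1 α β μ ν κ σ 5 5 = ν⁻¹ • Am := rfl
@[simp] lemma pi1_e_5_6 (α β μ ν κ σ : Fq) : pi1 α β μ ν κ σ 5 6 = (q ^ 2 * β⁻¹) • K2 := rfl
@[simp] lemma pi1_e_6_0 (α β μ ν κ σ : Fq) : pi1 α β μ ν κ σ 6 0 = 0 := rfl
@[simp] lemma pi1_e_6_1 (α β μ ν κ σ : Fq) : pi1 α β μ ν κ σ 6 1 = 0 := rfl
@[simp] lemma pi1_e_6_2 (α β μ ν κ σ : Fq) : pi1 α β μ ν κ σ 6 2 = 0 := rfl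
@[simp] lemma pi1_e_6_3 (α β μ ν κ σ : Fq) : pi1 α β μ ν κ σ 6 3 = 0 := rfl
@[simp] lemma pi1_e_6_4 (α β μ ν κ σ : Fq) : pi1 α β μ ν κ σ 6 4 = 0 := rfl
@[simp] lemma pi1_e_6_5 (α β μ ν κ σ : Fq) : pi1 α β μ ν κ σ 6 5 = (q ^ 2 * α⁻¹) • K2 := rfl
@[simp] lemma pi1_e_6_6 (α β μ ν κ σ : Fq) : pi1 α β μ ν κ σ 6 6 = μ⁻¹ • Ap := rfl
@[simp] lemma pi2_e_0_0 (α β μ ν κ σ : Fq) : pi2 α β μ ν κ σ 0 0 = κ • LinearMap.id := rfl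
@[simp] lemma pi2_e_0_1 (α β μ ν κ σ : Fq) : pi2 α β μ ν κ σ 0 1 = 0 := rfl
@[simp] lemma pi2_e_0_2 (α β μ ν κ σ : Fq) : pi2 α β μ ν κ σ 0 2 = 0 := rfl
@[simp] lemma pi2_e_0_3 (α β μ ν κ σ : Fq) : pi2 α β μ ν κ σ 0 3 = 0 := rfl
@[simp] lemma pi2_e_0_4 (α β μ ν κ σ : Fq) : pi2 α β μ ν κ σ 0 4 = 0 := rfl
@[simp] lemma pi2_e_0_5 (α β μ ν κ σ : Fq) : pi2 α β μ ν κ σ 0 5 = 0 := rfl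
@[simp] lemma pi2_e_0_6 (α β μ ν κ σ : Fq) : pi2 α β μ ν κ σ 0 6 = 0 := rfl
@[simp] lemma pi2_e_1_0 (α β μ ν κ σ : Fq) : pi2 α β μ ν κ σ 1 0 = 0 := rfl
@[simp] lemma pi2_e_1_1 (α β μ ν κ σ : Fq) : pi2 α β μ ν κ σ 1 1 = μ • Am := rfl
@[simp] lemma pi2_e_1_2 (α β μ ν κ σ : Fq) : pi2 α β μ ν κ σ 1 2 = α • K2 := rfl
@[simp] lemma pi2_e_1_3 (α β μ ν κ σ : Fq) : pi2 α β μ ν κ σ 1 3 = 0 := rfl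
@[simp] lemma pi2_e_1_4 (α β μ ν κ σ : Fq) : pi2 α β μ ν κ σ 1 4 = 0 := rfl
@[simp] lemma pi2_e_1_5 (α β μ ν κ σ : Fq) : pi2 α β μ ν κ σ 1 5 = 0 := rfl
@[simp] lemma pi2_e_1_6 (α β μ ν κ σ : Fq) : pi2 α β μ ν κ σ 1 6 = 0 := rfl
@[simp] lemma pi2_e_2_0 (α β μ ν κ σ : Fq) : pi2 α β μ ν κ σ 2 0 = 0 := rfl
@[simp] lemma pi2_e_2_1 (α β μ ν κ σ : Fq) : pi2 α β μ ν κ σ 2 1 = β • K2 := rfl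
@[simp] lemma pi2_e_2_2 (α β μ ν κ σ : Fq) : pi2 α β μ ν κ σ 2 2 = ν • Ap := rfl
@[simp] lemma pi2_e_2_3 (α β μ ν κ σ : Fq) : pi2 α β μ ν κ σ 2 3 = 0 := rfl
@[simp] lemma pi2_e_2_4 (α β μ ν κ σ : Fq) : pi2 α β μ ν κ σ 2 4 = 0 := rfl
@[simp] lemma pi2_e_2_5 (α β μ ν κ σ : Fq) : pi2 α β μ ν κ σ 2 5 = 0 := rfl
@[simp] lemma pi2_e_2_6 (α β μ ν κ σ : Fq) : pi2 α β μ ν κ σ 2 6 = 0 := rfl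
@[simp] lemma pi2_e_3_0 (α β μ ν κ σ : Fq) : pi2 α β μ ν κ σ 3 0 = 0 := rfl
@[simp] lemma pi2_e_3_1 (α β μ ν κ σ : Fq) : pi2 α β μ ν κ σ 3 1 = 0 := rfl
@[simp] lemma pi2_e_3_2 (α β μ ν κ σ : Fq) : pi2 α β μ ν κ σ 3 2 = 0 := rfl
@[simp] lemma pi2_e_3_3 (α β μ ν κ σ : Fq) : pi2 α β μ ν κ σ 3 3 = σ • LinearMap.id := rfl
@[simp] lemma pi2_e_3_4 (α β μ ν κ σ : Fq) : pi2 α β μ ν κ σ 3 4 = 0 := rfl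
@[simp] lemma pi2_e_3_5 (α β μ ν κ σ : Fq) : pi2 α β μ ν κ σ 3 5 = 0 := rfl
@[simp] lemma pi2_e_3_6 (α β μ ν κ σ : Fq) : pi2 α β μ ν κ σ 3 6 = 0 := rfl
@[simp] lemma pi2_e_4_0 (α β μ ν κ σ : Fq) : pi2 α β μ ν κ σ 4 0 = 0 := rfl
@[simp] lemma pi2_e_4_1 (α β μ ν κ σ : Fq) : pi2 α β μ ν κ σ 4 1 = 0 := rfl
@[simp] lemma pi2_e_4_2 (α β μ ν κ σ : Fq) : pi2 α β μ ν κ σ 4 2 = 0 := rfl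
@[simp] lemma pi2_e_4_3 (α β μ ν κ σ : Fq) : pi2 α β μ ν κ σ 4 3 = 0 := rfl
@[simp] lemma pi2_e_4_4 (α β μ ν κ σ : Fq) : pi2 α β μ ν κ σ 4 4 = ν⁻¹ • Am := rfl
@[simp] lemma pi2_e_4_5 (α β μ ν κ σ : Fq) : pi2 α β μ ν κ σ 4 5 = (q ^ 2 * β⁻¹) • K2 := rfl
@[simp] lemma pi2_e_4_6 (α β μ ν κ σ : Fq) : pi2 α β μ ν κ σ 4 6 = 0 := rfl
@[simp] lemma pi2_e_5_0 (α β μ ν κ σ : Fq) : pi2 α β μ ν κ σ 5 0 = 0 := rfl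
@[simp] lemma pi2_e_5_1 (α β μ ν κ σ : Fq) : pi2 α β μ ν κ σ 5 1 = 0 := rfl
@[simp] lemma pi2_e_5_2 (α β μ ν κ σ : Fq) : pi2 α β μ ν κ σ 5 2 = 0 := rfl
@[simp] lemma pi2_e_5_3 (α β μ ν κ σ : Fq) : pi2 α β μ ν κ σ 5 3 = 0 := rfl
@[simp] lemma pi2_e_5_4 (α β μ ν κ σ : Fq) : pi2 α β μ ν κ σ 5 4 = (q ^ 2 * α⁻¹) • K2 := rfl
@[simp] lemma pi2_e_5_5 (α β μ ν κ σ : Fq) : pi2 α β μ ν κ σ 5 5 = μ⁻¹ • Ap := rfl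
@[simp] lemma pi2_e_5_6 (α β μ ν κ σ : Fq) : pi2 α β μ ν κ σ 5 6 = 0 := rfl
@[simp] lemma pi2_e_6_0 (α β μ ν κ σ : Fq) : pi2 α β μ ν κ σ 6 0 = 0 := rfl
@[simp] lemma pi2_e_6_1 (α β μ ν κ σ : Fq) : pi2 α β μ ν κ σ 6 1 = 0 := rfl
@[simp] lemma pi2_e_6_2 (α β μ ν κ σ : Fq) : pi2 α β μ ν κ σ 6 2 = 0 := rfl
@[simp] lemma pi2_e_6_3 (α β μ ν κ σ : Fq) : pi2 α β μ ν κ σ 6 3 = 0 := rfl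
@[simp] lemma pi2_e_6_4 (α β μ ν κ σ : Fq) : pi2 α β μ ν κ σ 6 4 = 0 := rfl
@[simp] lemma pi2_e_6_5 (α β μ ν κ σ : Fq) : pi2 α β μ ν κ σ 6 5 = 0 := rfl
@[simp] lemma pi2_e_6_6 (α β μ ν κ σ : Fq) : pi2 α β μ ν κ σ 6 6 = κ⁻¹ • LinearMap.id := rfl

lemma eq_smul_ket0 (w : F ⊗[Fq] (F ⊗[Fq] F))
    (hA : ∀ a b c : ℕ, φ (a+1,b,c) w = 0)
    (hB : ∀ a b c : ℕ, φ (a,b+1,c) w = 0)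
    (hC : ∀ a b c : ℕ, φ (a,b,c+1) w = 0) :
    w = (φ (0,0,0) w) • (ket 0 ⊗ₜ[Fq] (ket 0 ⊗ₜ[Fq] ket 0)) := by
  have he : e w = (φ (0,0,0) w) • Finsupp.single ((0:ℕ),(0:ℕ),(0:ℕ)) 1 := by
    ext p
    obtain ⟨a, b, c⟩ := p
    have hval : ∀ a b c : ℕ, (e w) (a,b,c) = φ (a,b,c) w := fun _ _ _ => rfl
    rw [hval, Finsupp.smul_apply, Finsupp.single_apply]
    rcases a with _ | a
    · rcases b with _ | b
      · rcases c with _ | c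
        · simp
        · rw [hC 0 0 c, if_neg (by simp [Prod.ext_iff])]; simp
      · rw [hB 0 b c, if_neg (by simp [Prod.ext_iff])]; simp
    · rw [hA a b c, if_neg (by simp [Prod.ext_iff])]; simp
  have := congrArg e.symm he
  rw [e.symm_apply_apply, map_smul] at this
  rw [(LinearEquiv.symm_apply_eq e).mpr (e_ket 0 0 0).symm] at this
  exact this

lemma phi0_ket0 : φ (0,0,0) (ket 0 ⊗ₜ[Fq] (ket 0 ⊗ₜ[Fq] ket 0)) = 1 := by
  rw [φ_ket]; simp

lemma smul_cancel {x y : Fq}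
    (h : x • (ket 0 ⊗ₜ[Fq] (ket 0 ⊗ₜ[Fq] ket 0)) = y • (ket 0 ⊗ₜ[Fq] (ket 0 ⊗ₜ[Fq] ket 0))) :
    x = y := by
  have h2 := congrArg (φ (0,0,0)) h
  rw [map_smul, map_smul, phi0_ket0, smul_eq_mul, smul_eq_mul, mul_one, mul_one] at h2
  exact h2

lemma ket0_ne_zero : (ket 0 ⊗ₜ[Fq] (ket 0 ⊗ₜ[Fq] ket 0)) ≠ 0 := by
  intro h
  have h2 := congrArg (φ (0,0,0)) h
  rw [phi0_ket0, map_zero] at h2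
  exact one_ne_zero h2
lemma one_ne_negone : (1 : Fq) ≠ -1 := by
  intro h
  have h2 : algebraMap (Polynomial ℚ) Fq 1 = algebraMap (Polynomial ℚ) Fq (-1) := by
    rw [map_one, map_neg, map_one]; exact h
  have h3 := RatFunc.algebraMap_injective ℚ h2
  norm_num at h3

set_option maxHeartbeats 2000000 in
lemma sumL01 (α₁ β₁ μ₁ ν₁ κ₁ σ₁ α₂ β₂ μ₂ ν₂ κ₂ σ₂ : Fq) :
    (∑ K : Fin 7, ∑ L : Fin 7,
      TensorProduct.map (pi2 α₂ β₂ μ₂ ν₂ κ₂ σ₂ 0 K)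
        (TensorProduct.map (pi1 α₁ β₁ μ₁ ν₁ κ₁ σ₁ K L) (pi2 α₂ β₂ μ₂ ν₂ κ₂ σ₂ L 1)))
    = TensorProduct.map (κ₂ • LinearMap.id) (TensorProduct.map (α₁ • K2) (μ₂ • Am)) := by
  simp [Fin.sum_univ_seven, TensorProduct.map_zero_left, TensorProduct.map_zero_right]

set_option maxHeartbeats 2000000 in
lemma sumR01 (α₁ β₁ μ₁ ν₁ κ₁ σ₁ α₂ β₂ μ₂ ν₂ κ₂ σ₂ : Fq) :
    (∑ K : Fin 7, ∑ L : Fin 7,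
      TensorProduct.map (pi1 α₁ β₁ μ₁ ν₁ κ₁ σ₁ 0 K)
        (TensorProduct.map (pi2 α₂ β₂ μ₂ ν₂ κ₂ σ₂ K L) (pi1 α₁ β₁ μ₁ ν₁ κ₁ σ₁ L 1)))
    = TensorProduct.map (μ₁ • Am) (TensorProduct.map (κ₂ • LinearMap.id) (α₁ • K2)) +
      TensorProduct.map (α₁ • K2) (TensorProduct.map (μ₂ • Am) (ν₁ • Ap)) := by
  simp [Fin.sum_univ_seven, TensorProduct.map_zero_left, TensorProduct.map_zero_right]

set_option maxHeartbeats 2000000 in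
lemma sumL10 (α₁ β₁ μ₁ ν₁ κ₁ σ₁ α₂ β₂ μ₂ ν₂ κ₂ σ₂ : Fq) :
    (∑ K : Fin 7, ∑ L : Fin 7,
      TensorProduct.map (pi2 α₂ β₂ μ₂ ν₂ κ₂ σ₂ 1 K)
        (TensorProduct.map (pi1 α₁ β₁ μ₁ ν₁ κ₁ σ₁ K L) (pi2 α₂ β₂ μ₂ ν₂ κ₂ σ₂ L 0)))
    = TensorProduct.map (μ₂ • Am) (TensorProduct.map (β₁ • K2) (κ₂ • LinearMap.id)) := by
  simp [Fin.sum_univ_seven, TensorProduct.map_zero_left, TensorProduct.map_zero_right]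

set_option maxHeartbeats 2000000 in
lemma sumR10 (α₁ β₁ μ₁ ν₁ κ₁ σ₁ α₂ β₂ μ₂ ν₂ κ₂ σ₂ : Fq) :
    (∑ K : Fin 7, ∑ L : Fin 7,
      TensorProduct.map (pi1 α₁ β₁ μ₁ ν₁ κ₁ σ₁ 1 K)
        (TensorProduct.map (pi2 α₂ β₂ μ₂ ν₂ κ₂ σ₂ K L) (pi1 α₁ β₁ μ₁ ν₁ κ₁ σ₁ L 0)))
    = TensorProduct.map (β₁ • K2) (TensorProduct.map (κ₂ • LinearMap.id) (μ₁ • Am)) +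
      TensorProduct.map (ν₁ • Ap) (TensorProduct.map (μ₂ • Am) (β₁ • K2)) := by
  simp [Fin.sum_univ_seven, TensorProduct.map_zero_left, TensorProduct.map_zero_right]

set_option maxHeartbeats 2000000 in
lemma sumL00 (α₁ β₁ μ₁ ν₁ κ₁ σ₁ α₂ β₂ μ₂ ν₂ κ₂ σ₂ : Fq) :
    (∑ K : Fin 7, ∑ L : Fin 7,
      TensorProduct.map (pi2 α₂ β₂ μ₂ ν₂ κ₂ σ₂ 0 K)
        (TensorProduct.map (pi1 α₁ β₁ μ₁ ν₁ κ₁ σ₁ K L) (pi2 α₂ β₂ μ₂ ν₂ κ₂ σ₂ L 0)))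
    = TensorProduct.map (κ₂ • LinearMap.id) (TensorProduct.map (μ₁ • Am) (κ₂ • LinearMap.id)) := by
  simp [Fin.sum_univ_seven, TensorProduct.map_zero_left, TensorProduct.map_zero_right]

set_option maxHeartbeats 2000000 in
lemma sumR00 (α₁ β₁ μ₁ ν₁ κ₁ σ₁ α₂ β₂ μ₂ ν₂ κ₂ σ₂ : Fq) :
    (∑ K : Fin 7, ∑ L : Fin 7,
      TensorProduct.map (pi1 α₁ β₁ μ₁ ν₁ κ₁ σ₁ 0 K)
        (TensorProduct.map (pi2 α₂ β₂ μ₂ ν₂ κ₂ σ₂ K L) (pi1 α₁ β₁ μ₁ ν₁ κ₁ σ₁ L 0)))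
    = TensorProduct.map (μ₁ • Am) (TensorProduct.map (κ₂ • LinearMap.id) (μ₁ • Am)) +
      TensorProduct.map (α₁ • K2) (TensorProduct.map (μ₂ • Am) (β₁ • K2)) := by
  simp [Fin.sum_univ_seven, TensorProduct.map_zero_left, TensorProduct.map_zero_right]

set_option maxHeartbeats 2000000 in
lemma sumL33 (α₁ β₁ μ₁ ν₁ κ₁ σ₁ α₂ β₂ μ₂ ν₂ κ₂ σ₂ : Fq) :
    (∑ K : Fin 7, ∑ L : Fin 7,
      TensorProduct.map (pi2 α₂ β₂ μ₂ ν₂ κ₂ σ₂ 3 K)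
        (TensorProduct.map (pi1 α₁ β₁ μ₁ ν₁ κ₁ σ₁ K L) (pi2 α₂ β₂ μ₂ ν₂ κ₂ σ₂ L 3)))
    = TensorProduct.map (σ₂ • LinearMap.id) (TensorProduct.map (σ₁ • LinearMap.id) (σ₂ • LinearMap.id)) := by
  simp [Fin.sum_univ_seven, TensorProduct.map_zero_left, TensorProduct.map_zero_right]

set_option maxHeartbeats 2000000 in
lemma sumR33 (α₁ β₁ μ₁ ν₁ κ₁ σ₁ α₂ β₂ μ₂ ν₂ κ₂ σ₂ : Fq) :
    (∑ K : Fin 7, ∑ L : Fin 7,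
      TensorProduct.map (pi1 α₁ β₁ μ₁ ν₁ κ₁ σ₁ 3 K)
        (TensorProduct.map (pi2 α₂ β₂ μ₂ ν₂ κ₂ σ₂ K L) (pi1 α₁ β₁ μ₁ ν₁ κ₁ σ₁ L 3)))
    = TensorProduct.map (σ₁ • LinearMap.id) (TensorProduct.map (σ₂ • LinearMap.id) (σ₁ • LinearMap.id)) := by
  simp [Fin.sum_univ_seven, TensorProduct.map_zero_left, TensorProduct.map_zero_right]

set_option maxHeartbeats 2000000 in
lemma sumL02 (α₁ β₁ μ₁ ν₁ κ₁ σ₁ α₂ β₂ μ₂ ν₂ κ₂ σ₂ : Fq) :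
    (∑ K : Fin 7, ∑ L : Fin 7,
      TensorProduct.map (pi2 α₂ β₂ μ₂ ν₂ κ₂ σ₂ 0 K)
        (TensorProduct.map (pi1 α₁ β₁ μ₁ ν₁ κ₁ σ₁ K L) (pi2 α₂ β₂ μ₂ ν₂ κ₂ σ₂ L 2)))
    = TensorProduct.map (κ₂ • LinearMap.id) (TensorProduct.map (α₁ • K2) (α₂ • K2)) := by
  simp [Fin.sum_univ_seven, TensorProduct.map_zero_left, TensorProduct.map_zero_right]

set_option maxHeartbeats 2000000 in
lemma sumR02 (α₁ β₁ μ₁ ν₁ κ₁ σ₁ α₂ β₂ μ₂ ν₂ κ₂ σ₂ : Fq) :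
    (∑ K : Fin 7, ∑ L : Fin 7,
      TensorProduct.map (pi1 α₁ β₁ μ₁ ν₁ κ₁ σ₁ 0 K)
        (TensorProduct.map (pi2 α₂ β₂ μ₂ ν₂ κ₂ σ₂ K L) (pi1 α₁ β₁ μ₁ ν₁ κ₁ σ₁ L 2)))
    = TensorProduct.map (α₁ • K2) (TensorProduct.map (α₂ • K2) (κ₁ • LinearMap.id)) := by
  simp [Fin.sum_univ_seven, TensorProduct.map_zero_left, TensorProduct.map_zero_right]

set_option maxHeartbeats 2000000 in
lemma sumL11 (α₁ β₁ μ₁ ν₁ κ₁ σ₁ α₂ β₂ μ₂ ν₂ κ₂ σ₂ : Fq) :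
    (∑ K : Fin 7, ∑ L : Fin 7,
      TensorProduct.map (pi2 α₂ β₂ μ₂ ν₂ κ₂ σ₂ 1 K)
        (TensorProduct.map (pi1 α₁ β₁ μ₁ ν₁ κ₁ σ₁ K L) (pi2 α₂ β₂ μ₂ ν₂ κ₂ σ₂ L 1)))
    = TensorProduct.map (μ₂ • Am) (TensorProduct.map (ν₁ • Ap) (μ₂ • Am)) +
      TensorProduct.map (α₂ • K2) (TensorProduct.map (κ₁ • LinearMap.id) (β₂ • K2)) := by
  simp [Fin.sum_univ_seven, TensorProduct.map_zero_left, TensorProduct.map_zero_right]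

set_option maxHeartbeats 2000000 in
lemma sumR11 (α₁ β₁ μ₁ ν₁ κ₁ σ₁ α₂ β₂ μ₂ ν₂ κ₂ σ₂ : Fq) :
    (∑ K : Fin 7, ∑ L : Fin 7,
      TensorProduct.map (pi1 α₁ β₁ μ₁ ν₁ κ₁ σ₁ 1 K)
        (TensorProduct.map (pi2 α₂ β₂ μ₂ ν₂ κ₂ σ₂ K L) (pi1 α₁ β₁ μ₁ ν₁ κ₁ σ₁ L 1)))
    = TensorProduct.map (β₁ • K2) (TensorProduct.map (κ₂ • LinearMap.id) (α₁ • K2)) +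
      TensorProduct.map (ν₁ • Ap) (TensorProduct.map (μ₂ • Am) (ν₁ • Ap)) := by
  simp [Fin.sum_univ_seven, TensorProduct.map_zero_left, TensorProduct.map_zero_right]

/-- given κ₁ = σ₁, the existence of an intertwiner between π₁₂₁ and π₂₁₂
forces κ₁ = κ₂ = σ₂ and α₁β₁ = α₂β₂. -/
theorem equiv_121_212_forces_par2
    (α₁ β₁ μ₁ ν₁ κ₁ σ₁ : Fq) (hα₁ : α₁ ≠ 0) (hβ₁ : β₁ ≠ 0) (hμ₁ : μ₁ ≠ 0) (hν₁ : ν₁ ≠ 0)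
    (hκ₁ : κ₁ ≠ 0) (hσ₁0 : σ₁ ≠ 0)
    (hrel₁ : α₁ * β₁ = -q ^ 2 * (μ₁ * ν₁)) (hσ₁ : σ₁ = 1 ∨ σ₁ = -1)
    (α₂ β₂ μ₂ ν₂ κ₂ σ₂ : Fq) (hα₂ : α₂ ≠ 0) (hβ₂ : β₂ ≠ 0) (hμ₂ : μ₂ ≠ 0) (hν₂ : ν₂ ≠ 0)
    (hκ₂ : κ₂ ≠ 0) (hσ₂0 : σ₂ ≠ 0)
    (hrel₂ : α₂ * β₂ = -q ^ 2 * (μ₂ * ν₂)) (hσ₂ : σ₂ = 1 ∨ σ₂ = -1)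
    (par1 : κ₁ = σ₁)
    (hex : ∃ Φ : F ⊗[Fq] (F ⊗[Fq] F) →ₗ[Fq] F ⊗[Fq] (F ⊗[Fq] F),
      Function.Bijective Φ ∧
      ∀ I J : Fin 7,
        (∑ K : Fin 7, ∑ L : Fin 7,
            TensorProduct.map (pi2 α₂ β₂ μ₂ ν₂ κ₂ σ₂ I K)
              (TensorProduct.map (pi1 α₁ β₁ μ₁ ν₁ κ₁ σ₁ K L) (pi2 α₂ β₂ μ₂ ν₂ κ₂ σ₂ L J))) ∘ₗ Φ
          = Φ ∘ₗ (∑ K : Fin 7, ∑ L : Fin 7,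
              TensorProduct.map (pi1 α₁ β₁ μ₁ ν₁ κ₁ σ₁ I K)
                (TensorProduct.map (pi2 α₂ β₂ μ₂ ν₂ κ₂ σ₂ K L) (pi1 α₁ β₁ μ₁ ν₁ κ₁ σ₁ L J)))) :
    κ₁ = κ₂ ∧ κ₂ = σ₂ ∧ α₁ * β₁ = α₂ * β₂ := by
  obtain ⟨Φ, hbij, hco⟩ := hex
  have K2k0 : K2 (ket 0) = ket 0 := by rw [K2_ket]; norm_num
  have Amk0 : Am (ket 0) = 0 := by rw [Am_ket]; norm_num
  -- equation (0,1) evaluated at v0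
  have h01 := hco 0 1
  rw [sumL01, sumR01] at h01
  have e01 := LinearMap.congr_fun h01 (ket 0 ⊗ₜ[Fq] (ket 0 ⊗ₜ[Fq] ket 0))
  simp only [LinearMap.comp_apply, LinearMap.add_apply, TensorProduct.map_tmul,
    LinearMap.smul_apply, LinearMap.id_apply, K2k0, Amk0, smul_zero,
    TensorProduct.tmul_zero, TensorProduct.zero_tmul, add_zero, zero_add, map_zero] at e01
  -- equation (1,0)
  have h10 := hco 1 0
  rw [sumL10, sumR10] at h10
  have e10 := LinearMap.congr_fun h10 (ket 0 ⊗ₜ[Fq] (ket 0 ⊗ₜ[Fq] ket 0))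
  simp only [LinearMap.comp_apply, LinearMap.add_apply, TensorProduct.map_tmul,
    LinearMap.smul_apply, LinearMap.id_apply, K2k0, Amk0, smul_zero,
    TensorProduct.tmul_zero, TensorProduct.zero_tmul, add_zero, zero_add, map_zero] at e10
  -- equation (0,0)
  have h00 := hco 0 0
  rw [sumL00, sumR00] at h00
  have e00 := LinearMap.congr_fun h00 (ket 0 ⊗ₜ[Fq] (ket 0 ⊗ₜ[Fq] ket 0))
  simp only [LinearMap.comp_apply, LinearMap.add_apply, TensorProduct.map_tmul,
    LinearMap.smul_apply, LinearMap.id_apply, K2k0, Amk0, smul_zero,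
    TensorProduct.tmul_zero, TensorProduct.zero_tmul, add_zero, zero_add, map_zero] at e00
  -- the three coordinate vanishing conditions on w := Φ v0
  have hC : ∀ a b c : ℕ, φ (a,b,c+1) (Φ (ket 0 ⊗ₜ[Fq] (ket 0 ⊗ₜ[Fq] ket 0))) = 0 := by
    intro a b c
    have h := LinearMap.congr_fun (coordC κ₂ α₁ μ₂ a b c)
      (Φ (ket 0 ⊗ₜ[Fq] (ket 0 ⊗ₜ[Fq] ket 0)))
    rw [LinearMap.comp_apply, e01, map_zero, LinearMap.smul_apply, smul_eq_mul] at h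
    have hne : (κ₂*α₁*μ₂*q^(2*b)*(1-q^(4*(c+1)))) ≠ 0 :=
      mul_ne_zero (mul_ne_zero (mul_ne_zero (mul_ne_zero hκ₂ hα₁) hμ₂)
        (pow_ne_zero _ q_ne_zero)) (one_sub_q_pow_ne_zero (by omega))
    exact (mul_eq_zero.mp h.symm).resolve_left hne
  have hA : ∀ a b c : ℕ, φ (a+1,b,c) (Φ (ket 0 ⊗ₜ[Fq] (ket 0 ⊗ₜ[Fq] ket 0))) = 0 := by
    intro a b c
    have h := LinearMap.congr_fun (coordA μ₂ β₁ κ₂ a b c)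
      (Φ (ket 0 ⊗ₜ[Fq] (ket 0 ⊗ₜ[Fq] ket 0)))
    rw [LinearMap.comp_apply, e10, map_zero, LinearMap.smul_apply, smul_eq_mul] at h
    have hne : (μ₂*β₁*κ₂*(1-q^(4*(a+1)))*q^(2*b)) ≠ 0 :=
      mul_ne_zero (mul_ne_zero (mul_ne_zero (mul_ne_zero hμ₂ hβ₁) hκ₂)
        (one_sub_q_pow_ne_zero (by omega))) (pow_ne_zero _ q_ne_zero)
    exact (mul_eq_zero.mp h.symm).resolve_left hne
  have hB : ∀ a b c : ℕ, φ (a,b+1,c) (Φ (ket 0 ⊗ₜ[Fq] (ket 0 ⊗ₜ[Fq] ket 0))) = 0 := by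
    intro a b c
    have h := LinearMap.congr_fun (coordB κ₂ μ₁ κ₂ a b c)
      (Φ (ket 0 ⊗ₜ[Fq] (ket 0 ⊗ₜ[Fq] ket 0)))
    rw [LinearMap.comp_apply, e00, map_zero, LinearMap.smul_apply, smul_eq_mul] at h
    have hne : (κ₂*μ₁*κ₂*(1-q^(4*(b+1)))) ≠ 0 :=
      mul_ne_zero (mul_ne_zero (mul_ne_zero hκ₂ hμ₁) hκ₂)
        (one_sub_q_pow_ne_zero (by omega))
    exact (mul_eq_zero.mp h.symm).resolve_left hne
  -- Φ v0 = c • v0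
  have hw := eq_smul_ket0 (Φ (ket 0 ⊗ₜ[Fq] (ket 0 ⊗ₜ[Fq] ket 0))) hA hB hC
  set c : Fq := φ (0,0,0) (Φ (ket 0 ⊗ₜ[Fq] (ket 0 ⊗ₜ[Fq] ket 0))) with hcdef
  have hcne : c ≠ 0 := by
    intro h0
    rw [h0, zero_smul] at hw
    exact ket0_ne_zero (hbij.1 (hw.trans (map_zero Φ).symm))
  -- equation (0,2): forces κ₂ = κ₁
  have h02 := hco 0 2
  rw [sumL02, sumR02] at h02
  have e02 := LinearMap.congr_fun h02 (ket 0 ⊗ₜ[Fq] (ket 0 ⊗ₜ[Fq] ket 0))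
  rw [LinearMap.comp_apply, LinearMap.comp_apply, hw] at e02
  simp only [map_smul, TensorProduct.map_tmul, LinearMap.smul_apply, LinearMap.id_apply,
    K2k0, tmul3_smul, smul_smul, hw] at e02
  have hscal02 := smul_cancel e02
  have hκeq : κ₂ = κ₁ := by
    have h2 : κ₂ * (c * (α₁ * α₂)) = κ₁ * (c * (α₁ * α₂)) := by linear_combination hscal02
    exact mul_right_cancel₀ (mul_ne_zero hcne (mul_ne_zero hα₁ hα₂)) h2
  -- equation (3,3): forces σ₁ = σ₂
  have h33 := hco 3 3
  rw [sumL33, sumR33] at h33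
  have e33 := LinearMap.congr_fun h33 (ket 0 ⊗ₜ[Fq] (ket 0 ⊗ₜ[Fq] ket 0))
  rw [LinearMap.comp_apply, LinearMap.comp_apply, hw] at e33
  simp only [map_smul, TensorProduct.map_tmul, LinearMap.smul_apply, LinearMap.id_apply,
    tmul3_smul, smul_smul, hw] at e33
  have hscal33 := smul_cancel e33
  have hσeq : σ₁ = σ₂ := by
    rcases hσ₁ with rfl | rfl <;> rcases hσ₂ with rfl | rfl <;>
      first
        | rfl
        | (exfalso
           have h2 : (1:Fq) * c = (-1) * c := by linear_combination hscal33
           exact one_ne_negone (mul_right_cancel₀ hcne h2))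
        | (exfalso
           have h2 : (-1:Fq) * c = 1 * c := by linear_combination hscal33
           exact one_ne_negone (mul_right_cancel₀ hcne h2).symm)
  -- equation (1,1): forces α₂β₂κ₁ = α₁β₁κ₂
  have h11 := hco 1 1
  rw [sumL11, sumR11] at h11
  have e11 := LinearMap.congr_fun h11 (ket 0 ⊗ₜ[Fq] (ket 0 ⊗ₜ[Fq] ket 0))
  rw [LinearMap.comp_apply, LinearMap.comp_apply, hw] at e11
  simp only [LinearMap.add_apply, map_smul, TensorProduct.map_tmul, LinearMap.smul_apply,
    LinearMap.id_apply, K2k0, Amk0, smul_zero, TensorProduct.tmul_zero,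
    TensorProduct.zero_tmul, add_zero, zero_add, map_zero, map_add,
    tmul3_smul, smul_smul, hw] at e11
  have hscal11 := smul_cancel e11
  have hαβ : α₁ * β₁ = α₂ * β₂ := by
    have h2 : (α₂ * β₂) * (κ₁ * c) = (α₁ * β₁) * (κ₁ * c) := by
      rw [hκeq] at hscal11
      linear_combination hscal11
    exact (mul_right_cancel₀ (mul_ne_zero hκ₁ hcne) h2).symm
  exact ⟨hκeq.symm, hκeq ▸ (par1 ▸ hσeq), hαβ⟩
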